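/- Let m > 0 and s ≠ 0. Then the iterated Lebesgue integral ∫_{-∞}^{∞} ( ∫_{-∞}^{∞} cos(p y) · e^{-|s|√(m²+p²)} / (2√(m²+p²)) dp ) dy is well defined (the inner integral is absolutely convergent for every y, and the resulting function of y is absolutely integrable) and equals (π/m) · e^{-m|s|}. -/

import Mathlib

/-!
The inner integral is `Re 𝓕g (y / 2π)` for `g(p) = e^{-aω(p)} / (2ω(p))`, `ω(p) = √(m² + p²)`,
`a = |s|`. Since `ω ≥ max m |p|`, the functions `g, g', g''` are all dominated by multiples of
`e^{-a|p|}`; two integrations by parts then give `(1 + (2πw)²) ‖𝓕g(w)‖ ≤ ‖g‖₁ + ‖g''‖₁`, so `𝓕g`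
is integrable, and Fourier inversion at `0` gives `∫ 𝓕g = g(0) = e^{-am} / (2m)`. The substitution
`y = 2πw` contributes the factor `2π`.
-/

open MeasureTheory Real Set
open scoped FourierTransform RealInnerProductSpace

lemma integrable_exp_neg_mul_abs {b : ℝ} (hb : 0 < b) :
    Integrable fun x : ℝ => exp (-b * |x|) := by
  set h : ℝ → ℝ := (Ici 0).indicator fun x => exp (-b * x)
  have hh : Integrable h := by
    refine IntegrableOn.integrable_indicator ?_ measurableSet_Ici
    exact (integrableOn_Ici_iff_integrableOn_Ioi).2 (exp_neg_integrableOn_Ioi 0 hb)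
  refine (hh.add hh.comp_neg).mono' (by fun_prop) (ae_of_all _ fun x => ?_)
  have hpos : ∀ t, 0 ≤ exp t := fun t => (exp_pos t).le
  rw [norm_of_nonneg (hpos _)]
  simp only [Pi.add_apply, h, indicator_apply, mem_Ici]
  rcases le_total 0 x with hx | hx
  · simp only [hx, abs_of_nonneg hx, if_true]
    split_ifs <;> linarith [hpos (-b * -x)]
  · simp only [neg_nonneg.2 hx, abs_of_nonpos hx, if_true]
    split_ifs <;> linarith [hpos (-b * x)]

lemma integrable_of_abs_le_mul_exp_neg_mul_abs {f : ℝ → ℝ} {b C : ℝ} (hb : 0 < b)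
    (hf : Measurable f) (h : ∀ x, |f x| ≤ C * exp (-b * |x|)) : Integrable f :=
  ((integrable_exp_neg_mul_abs hb).const_mul C).mono' hf.aestronglyMeasurable (ae_of_all _ h)

section Fourier

variable {E : Type*} [NormedAddCommGroup E] [NormedSpace ℂ E] {f f' f'' : ℝ → E}

lemma norm_fourier_of_hasDerivAt_hasDerivAt (hf : ∀ x, HasDerivAt f (f' x) x)
    (hf' : ∀ x, HasDerivAt f' (f'' x) x) (hfi : Integrable f) (hf'i : Integrable f')
    (hf''i : Integrable f'') (w : ℝ) :
    ‖𝓕 f'' w‖ = (2 * π * w) ^ 2 * ‖𝓕 f w‖ := by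
  have hd : deriv f = f' := funext fun x => (hf x).deriv
  have hd' : deriv f' = f'' := funext fun x => (hf' x).deriv
  have hnorm : ‖2 * (π : ℂ) * Complex.I * w‖ = |2 * π * w| := by
    simp [abs_mul, abs_of_pos pi_pos]
  rw [← hd', Real.fourier_deriv hf'i (fun x => (hf' x).differentiableAt) (hd' ▸ hf''i), ← hd,
    Real.fourier_deriv hfi (fun x => (hf x).differentiableAt) (hd ▸ hf'i), norm_smul, norm_smul,
    ← mul_assoc, ← sq, hnorm, sq_abs]

theorem integrable_fourier_of_hasDerivAt_hasDerivAt (hf : ∀ x, HasDerivAt f (f' x) x)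
    (hf' : ∀ x, HasDerivAt f' (f'' x) x) (hfi : Integrable f) (hf'i : Integrable f')
    (hf''i : Integrable f'') : Integrable (𝓕 f) := by
  set C := (∫ v, ‖f v‖) + ∫ v, ‖f'' v‖
  have hbound : ∀ w, ‖𝓕 f w‖ ≤ C * (1 + (2 * π * w) ^ 2)⁻¹ := by
    intro w
    rw [← div_eq_mul_inv, le_div_iff₀ (by positivity), mul_add, mul_one, mul_comm,
      ← norm_fourier_of_hasDerivAt_hasDerivAt hf hf' hfi hf'i hf''i]
    exact add_le_add (VectorFourier.norm_fourierIntegral_le_integral_norm _ _ _ _ _)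
      (VectorFourier.norm_fourierIntegral_le_integral_norm _ _ _ _ _)
  exact ((integrable_inv_one_add_sq.comp_mul_left' (by positivity : 2 * π ≠ 0)).const_mul C).mono'
    (VectorFourier.fourierIntegral_continuous Real.continuous_fourierChar continuous_inner
      hfi).aestronglyMeasurable (ae_of_all _ hbound)

lemma integral_fourier_eq_apply_zero [CompleteSpace E] (hf : Integrable f) (hFf : Integrable (𝓕 f))
    (h0 : ContinuousAt f 0) : ∫ w, 𝓕 f w = f 0 := by
  simpa [Real.fourierInv_eq] using hf.fourierInv_fourier_eq hFf h0

end Fourier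

lemma integral_cos_mul_eq_re_fourier {g : ℝ → ℝ} (hg : Integrable g) (y : ℝ) :
    ∫ p, cos (p * y) * g p = (𝓕 (fun p => (g p : ℂ)) (y / (2 * π))).re := by
  have hint : Integrable fun p : ℝ => 𝐞 (-⟪p, y / (2 * π)⟫) • (g p : ℂ) :=
    (Real.fourierIntegral_convergent_iff _).2 hg.ofReal
  rw [Real.fourier_eq, ← RCLike.re_to_complex, ← integral_re hint]
  congr 1 with p
  have hphase : 2 * π * -⟪p, y / (2 * π)⟫ = -(p * y) := by
    rw [Real.inner_apply]; field_simp
  simp only [Circle.smul_def, Real.fourierChar_apply, hphase, smul_eq_mul, RCLike.re_to_complex,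
    Complex.mul_re, Complex.ofReal_re, Complex.ofReal_im, mul_zero, sub_zero,
    Complex.exp_ofReal_mul_I_re, cos_neg]

theorem integral_integral_cos_mul {g : ℝ → ℝ} (hg : Integrable g) (h0 : ContinuousAt g 0)
    (hFg : Integrable (𝓕 fun p => (g p : ℂ))) :
    (∀ y, Integrable fun p => cos (p * y) * g p) ∧
    Integrable (fun y => ∫ p, cos (p * y) * g p) ∧
    ∫ y, ∫ p, cos (p * y) * g p = 2 * π * g 0 := by
  have h2π : 0 < 2 * π := by positivity
  have hFg' : Integrable fun y => 𝓕 (fun p => (g p : ℂ)) (y / (2 * π)) := hFg.comp_div h2π.ne'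
  simp_rw [integral_cos_mul_eq_re_fourier hg]
  refine ⟨fun y => hg.bdd_mul (c := 1) (by fun_prop)
    (ae_of_all _ fun p => abs_cos_le_one _), hFg'.re, ?_⟩
  have hre := integral_re hFg'
  simp only [RCLike.re_to_complex] at hre
  rw [hre, Measure.integral_comp_div, abs_of_pos h2π,
    integral_fourier_eq_apply_zero hg.ofReal hFg (Complex.continuous_ofReal.continuousAt.comp h0)]
  simp

namespace KallenLehmann

noncomputable def energy (m p : ℝ) : ℝ := √(m ^ 2 + p ^ 2)

noncomputable def kernel (m a p : ℝ) : ℝ := exp (-a * energy m p) / (2 * energy m p)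

noncomputable def kernelDeriv (m a p : ℝ) : ℝ :=
  -(p * exp (-a * energy m p) * (a * energy m p + 1)) / (2 * energy m p ^ 3)

noncomputable def kernelDeriv2 (m a p : ℝ) : ℝ :=
  exp (-a * energy m p) * (a ^ 2 * p ^ 2 * energy m p ^ 2 + 3 * p ^ 2 * (a * energy m p + 1)
    - (a * energy m p + 1) * energy m p ^ 2) / (2 * energy m p ^ 5)

variable {m a : ℝ}

lemma le_energy (p : ℝ) : m ≤ energy m p :=
  le_sqrt_of_sq_le (by nlinarith)

lemma abs_le_energy (p : ℝ) : |p| ≤ energy m p :=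
  abs_le_sqrt (by nlinarith)

lemma energy_pos (hm : 0 < m) (p : ℝ) : 0 < energy m p :=
  hm.trans_le (le_energy p)

lemma hasDerivAt_energy (hm : 0 < m) (p : ℝ) :
    HasDerivAt (energy m) (p / energy m p) p := by
  have h := ((hasDerivAt_pow 2 p).const_add (m ^ 2)).sqrt (by positivity)
  refine h.congr_deriv ?_
  have := (energy_pos hm p).ne'
  simp only [energy] at this ⊢
  field_simp
  ring

lemma hasDerivAt_exp_neg_mul_energy (hm : 0 < m) (p : ℝ) :
    HasDerivAt (fun q => exp (-a * energy m q))
      (exp (-a * energy m p) * (-a * (p / energy m p))) p :=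
  ((hasDerivAt_energy hm p).const_mul (-a)).exp

lemma hasDerivAt_kernel (hm : 0 < m) (p : ℝ) :
    HasDerivAt (kernel m a) (kernelDeriv m a p) p := by
  have hω := (energy_pos hm p).ne'
  refine ((hasDerivAt_exp_neg_mul_energy hm p).div ((hasDerivAt_energy hm p).const_mul 2)
    (by positivity)).congr_deriv ?_
  unfold kernelDeriv
  field_simp
  ring

lemma hasDerivAt_kernelDeriv (hm : 0 < m) (p : ℝ) :
    HasDerivAt (kernelDeriv m a) (kernelDeriv2 m a p) p := by
  have hω := (energy_pos hm p).ne'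
  have hnum := (((hasDerivAt_id p).mul (hasDerivAt_exp_neg_mul_energy (a := a) hm p)).mul
    (((hasDerivAt_energy hm p).const_mul a).add_const 1)).neg
  refine (hnum.div (((hasDerivAt_energy hm p).pow 3).const_mul 2) (by simp [hω])).congr_deriv ?_
  simp only [Pi.pow_apply, Pi.neg_apply, Pi.mul_apply, id]
  unfold kernelDeriv2
  field_simp
  ring

lemma exp_neg_mul_energy_le (ha : 0 ≤ a) (p : ℝ) : exp (-a * energy m p) ≤ exp (-a * |p|) :=
  exp_le_exp.2 (by nlinarith [abs_le_energy (m := m) p])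

lemma abs_kernel_le (hm : 0 < m) (ha : 0 ≤ a) (p : ℝ) :
    |kernel m a p| ≤ 1 / (2 * m) * exp (-a * |p|) := by
  have hω := energy_pos hm p
  rw [kernel, abs_of_pos (by positivity), ← mul_one_div, mul_comm]
  refine mul_le_mul ?_ (exp_neg_mul_energy_le ha p) (exp_pos _).le (by positivity)
  gcongr
  exact le_energy p

lemma abs_kernelDeriv_le (hm : 0 < m) (ha : 0 ≤ a) (p : ℝ) :
    |kernelDeriv m a p| ≤ (a / (2 * m) + 1 / (2 * m ^ 2)) * exp (-a * |p|) := by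
  unfold kernelDeriv
  set ω := energy m p
  have hω : 0 < ω := energy_pos hm p
  calc |-(p * exp (-a * ω) * (a * ω + 1)) / (2 * ω ^ 3)|
      = |p| * exp (-a * ω) * (a * ω + 1) / (2 * ω ^ 3) := by
        rw [abs_div, abs_neg, abs_mul, abs_mul, abs_of_pos (exp_pos _),
          abs_of_pos (by positivity : 0 < a * ω + 1), abs_of_pos (by positivity : 0 < 2 * ω ^ 3)]
    _ ≤ ω * exp (-a * ω) * (a * ω + 1) / (2 * ω ^ 3) := by
        gcongr
        exact abs_le_energy p
    _ = (a / (2 * ω) + 1 / (2 * ω ^ 2)) * exp (-a * ω) := by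
        field_simp
    _ ≤ (a / (2 * m) + 1 / (2 * m ^ 2)) * exp (-a * |p|) := by
        refine mul_le_mul ?_ (exp_neg_mul_energy_le ha p) (exp_pos _).le (by positivity)
        gcongr <;> exact le_energy p

lemma abs_kernelDeriv2_le (hm : 0 < m) (ha : 0 ≤ a) (p : ℝ) :
    |kernelDeriv2 m a p| ≤ (a ^ 2 / (2 * m) + 2 * a / m ^ 2 + 2 / m ^ 3) * exp (-a * |p|) := by
  unfold kernelDeriv2
  set ω := energy m p
  have hω : 0 < ω := energy_pos hm p
  have hp : p ^ 2 ≤ ω ^ 2 := sq_le_sq' (abs_le.1 (abs_le_energy p)).1 (abs_le.1 (abs_le_energy p)).2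
  have hnum : |a ^ 2 * p ^ 2 * ω ^ 2 + 3 * p ^ 2 * (a * ω + 1) - (a * ω + 1) * ω ^ 2|
      ≤ a ^ 2 * ω ^ 2 * ω ^ 2 + 3 * ω ^ 2 * (a * ω + 1) + (a * ω + 1) * ω ^ 2 := by
    refine (abs_sub _ _).trans ?_
    rw [abs_of_nonneg (by positivity), abs_of_nonneg (by positivity)]
    gcongr
  calc |exp (-a * ω) * (a ^ 2 * p ^ 2 * ω ^ 2 + 3 * p ^ 2 * (a * ω + 1) - (a * ω + 1) * ω ^ 2)
        / (2 * ω ^ 5)|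
      ≤ exp (-a * ω) * (a ^ 2 * ω ^ 2 * ω ^ 2 + 3 * ω ^ 2 * (a * ω + 1) + (a * ω + 1) * ω ^ 2)
          / (2 * ω ^ 5) := by
        rw [abs_div, abs_mul, abs_of_pos (exp_pos _), abs_of_pos (by positivity : 0 < 2 * ω ^ 5)]
        gcongr
    _ = (a ^ 2 / (2 * ω) + 2 * a / ω ^ 2 + 2 / ω ^ 3) * exp (-a * ω) := by
        field_simp
        ring
    _ ≤ (a ^ 2 / (2 * m) + 2 * a / m ^ 2 + 2 / m ^ 3) * exp (-a * |p|) := by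
        refine mul_le_mul ?_ (exp_neg_mul_energy_le ha p) (exp_pos _).le (by positivity)
        gcongr <;> exact le_energy p

lemma integrable_kernel (hm : 0 < m) (ha : 0 < a) : Integrable (kernel m a) :=
  integrable_of_abs_le_mul_exp_neg_mul_abs ha (by unfold kernel energy; fun_prop)
    (abs_kernel_le hm ha.le)

lemma integrable_kernelDeriv (hm : 0 < m) (ha : 0 < a) : Integrable (kernelDeriv m a) :=
  integrable_of_abs_le_mul_exp_neg_mul_abs ha (by unfold kernelDeriv energy; fun_prop)
    (abs_kernelDeriv_le hm ha.le)

lemma integrable_kernelDeriv2 (hm : 0 < m) (ha : 0 < a) : Integrable (kernelDeriv2 m a) :=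
  integrable_of_abs_le_mul_exp_neg_mul_abs ha (by unfold kernelDeriv2 energy; fun_prop)
    (abs_kernelDeriv2_le hm ha.le)

lemma integrable_fourier_kernel (hm : 0 < m) (ha : 0 < a) :
    Integrable (𝓕 fun p => (kernel m a p : ℂ)) :=
  integrable_fourier_of_hasDerivAt_hasDerivAt (fun p => (hasDerivAt_kernel hm p).ofReal_comp)
    (fun p => (hasDerivAt_kernelDeriv hm p).ofReal_comp) (integrable_kernel hm ha).ofReal
    (integrable_kernelDeriv hm ha).ofReal (integrable_kernelDeriv2 hm ha).ofReal

end KallenLehmann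

/-- Single-mass Källén–Lehmann computation: for `m > 0` and `s ≠ 0`, the inner integral
`∫ cos(py) e^{-|s|√(m²+p²)} / (2√(m²+p²)) dp` is absolutely convergent for every `y`,
the resulting function of `y` is absolutely integrable, and the iterated integral equals
`(π/m) e^{-m|s|}`. -/
theorem stmt18 (m s : ℝ) (hm : 0 < m) (hs : s ≠ 0) :
    (∀ y : ℝ, Integrable (fun p : ℝ =>
        cos (p * y) * exp (-|s| * sqrt (m ^ 2 + p ^ 2)) / (2 * sqrt (m ^ 2 + p ^ 2)))) ∧
    Integrable (fun y : ℝ => ∫ p : ℝ,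
        cos (p * y) * exp (-|s| * sqrt (m ^ 2 + p ^ 2)) / (2 * sqrt (m ^ 2 + p ^ 2))) ∧
    (∫ y : ℝ, ∫ p : ℝ,
        cos (p * y) * exp (-|s| * sqrt (m ^ 2 + p ^ 2)) / (2 * sqrt (m ^ 2 + p ^ 2)))
      = π / m * exp (-m * |s|) := by
  have ha : 0 < |s| := abs_pos.2 hs
  obtain ⟨hinner, houter, hvalue⟩ := integral_integral_cos_mul
    (KallenLehmann.integrable_kernel hm ha) (KallenLehmann.hasDerivAt_kernel hm 0).continuousAt
    (KallenLehmann.integrable_fourier_kernel hm ha)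
  simp only [KallenLehmann.kernel, KallenLehmann.energy, ← mul_div_assoc] at hinner houter hvalue
  refine ⟨hinner, houter, hvalue.trans ?_⟩
  rw [zero_pow two_ne_zero, add_zero, sqrt_sq hm.le]
  field_simp
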